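/- Let H be a digraph whose underlying graph has a maximum matching M with |M| = m ≥ 1, let the uncovered set X satisfy |X| ≥ 3 and δ⁰(H) ≥ m. Then there is no edge e = [u,v] ∈ M and vertex x₁ ∈ X such that both u and v are adjacent to x₁. -/

import Mathlib

/-!
Let `M` be a maximum matching with uncovered set `X`, and for `p ∈ X` let `d(p)` be the number
of edges of `M` both of whose ends are adjacent to `p`. Every neighbour of `p` is covered, and an
edge counted by `d(p)` is invisible to every other `q ∈ X`, since otherwise `q a b p` would be an
augmenting path. So each edge of `M` supplies at most one neighbour to `p`, two if it is counted
by `d(p)`, and none if it is counted by `d(q)` or `d(r)`: for distinct `p, q, r ∈ X`,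
`deg p + d(q) + d(r) ≤ d(p) + |M|`. With `deg ≥ |M|`, adding the three cyclic instances gives
`d(p) + d(q) + d(r) ≤ 0`.
-/

/-- The underlying graph of a digraph given by its arc relation. -/
def UGraph {V : Type*} (A : V → V → Prop) : SimpleGraph V where
  Adj a b := a ≠ b ∧ (A a b ∨ A b a)
  symm := ⟨fun a b h => ⟨h.1.symm, h.2.symm⟩⟩
  loopless := ⟨fun a h => h.1 rfl⟩

open SimpleGraph

lemma Sym2.ncard_inter_coe_le {α : Type*} (s : Set α) [DecidablePred (· ∈ s.sym2)] (e : Sym2 α) :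
    (s ∩ e).ncard ≤ 1 + if e ∈ s.sym2 then 1 else 0 := by
  induction e using Sym2.ind with
  | _ a b =>
    rw [Sym2.coe_mk]
    split_ifs with hab
    · calc (s ∩ {a, b}).ncard ≤ ({a, b} : Set α).ncard := Set.ncard_le_ncard Set.inter_subset_right
        _ ≤ ({b} : Set α).ncard + 1 := Set.ncard_insert_le a {b}
        _ = 1 + 1 := by rw [Set.ncard_singleton]
    · rw [Set.mk_mem_sym2_iff, not_and_or] at hab
      obtain ⟨c, hc⟩ : ∃ c, s ∩ {a, b} ⊆ {c} := by
        rcases hab with ha | hb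
        · exact ⟨b, by grind⟩
        · exact ⟨a, by grind⟩
      simpa using Set.ncard_le_ncard hc

lemma Set.ncard_le_card_add_card_filter_mem_sym2 {α : Type*} {s : Set α} {E : Finset (Sym2 α)}
    [DecidablePred (· ∈ s.sym2)] (hs : s ⊆ ⋃ e ∈ E, (e : Set α)) :
    s.ncard ≤ E.card + (E.filter (· ∈ s.sym2)).card :=
  calc s.ncard = (⋃ e ∈ E, s ∩ e).ncard := by rw [← Set.inter_iUnion₂, Set.inter_eq_left.mpr hs]
    _ ≤ ∑ e ∈ E, (s ∩ e).ncard := E.set_ncard_biUnion_le _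
    _ ≤ ∑ e ∈ E, (1 + if e ∈ s.sym2 then 1 else 0) :=
      Finset.sum_le_sum fun e _ => Sym2.ncard_inter_coe_le s e
    _ = E.card + (E.filter (· ∈ s.sym2)).card := by
      rw [Finset.sum_add_distrib, Finset.sum_boole, Finset.sum_const, smul_eq_mul, mul_one,
        Nat.cast_id]

namespace SimpleGraph.Subgraph

variable {V : Type*} {G : SimpleGraph V} {M : G.Subgraph} {a b x y : V}

lemma IsMatching.sup_subgraphOfAdj (hM : M.IsMatching) (hx : x ∉ M.verts) (hy : y ∉ M.verts)
    (hxy : G.Adj x y) : (M ⊔ G.subgraphOfAdj hxy).IsMatching :=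
  hM.sup (.subgraphOfAdj hxy) <| .mono (support_subset_verts _) (support_subset_verts _) <| by
    simpa [Set.disjoint_insert_right] using ⟨hx, hy⟩

lemma ncard_edgeSet_sup_subgraphOfAdj [Finite V] (hx : x ∉ M.verts) (hxy : G.Adj x y) :
    (M ⊔ G.subgraphOfAdj hxy).edgeSet.ncard = M.edgeSet.ncard + 1 := by
  have hnew : s(x, y) ∉ M.edgeSet := fun h => hx (M.edge_vert (Subgraph.mem_edgeSet.mp h))
  rw [edgeSet_sup, edgeSet_subgraphOfAdj, Set.union_singleton, Set.ncard_insert_of_notMem hnew]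

lemma IsMatching.deleteVerts_pair (hM : M.IsMatching) (hab : M.Adj a b) :
    (M.deleteVerts {a, b}).IsMatching := by
  rintro v ⟨hv, hvab⟩
  obtain ⟨w, hvw, hw⟩ := hM hv
  refine ⟨w, deleteVerts_adj.mpr ⟨hv, hvab, M.edge_vert hvw.symm, ?_, hvw⟩,
    fun w' hw' => hw w' (deleteVerts_adj.mp hw').2.2.2.2⟩
  rintro (rfl | rfl)
  · exact hvab (.inr (hM.eq_of_adj_right hvw hab.symm))
  · exact hvab (.inl (hM.eq_of_adj_right hvw hab))

lemma IsMatching.edgeSet_deleteVerts_pair (hM : M.IsMatching) (hab : M.Adj a b) :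
    (M.deleteVerts {a, b}).edgeSet = M.edgeSet \ {s(a, b)} := by
  ext e
  induction e using Sym2.ind with
  | _ u v =>
    simp only [Subgraph.mem_edgeSet, deleteVerts_adj, Set.mem_sdiff, Set.mem_singleton_iff,
      Set.mem_insert_iff, Sym2.eq_iff]
    constructor
    · rintro ⟨-, hu, -, hv, huv⟩
      exact ⟨huv, by tauto⟩
    · rintro ⟨huv, hne⟩
      refine ⟨M.edge_vert huv, ?_, M.edge_vert huv.symm, ?_, huv⟩ <;> rintro (rfl | rfl)
      · exact hne (.inl ⟨rfl, hM.eq_of_adj_left huv hab⟩)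
      · exact hne (.inr ⟨rfl, hM.eq_of_adj_left huv hab.symm⟩)
      · exact hne (.inr ⟨hM.eq_of_adj_right huv hab.symm, rfl⟩)
      · exact hne (.inl ⟨hM.eq_of_adj_right huv hab, rfl⟩)

lemma IsMatching.ncard_edgeSet_deleteVerts_pair [Finite V] (hM : M.IsMatching)
    (hab : M.Adj a b) : (M.deleteVerts {a, b}).edgeSet.ncard + 1 = M.edgeSet.ncard := by
  rw [hM.edgeSet_deleteVerts_pair hab,
    Set.ncard_sdiff_singleton_add_one (Subgraph.mem_edgeSet.mpr hab)]

def IsMaximumMatching (M : G.Subgraph) : Prop :=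
  M.IsMatching ∧ ∀ M' : G.Subgraph, M'.IsMatching → M'.edgeSet.ncard ≤ M.edgeSet.ncard

variable [Finite V]

lemma IsMaximumMatching.not_adj_of_notMem_verts (hM : M.IsMaximumMatching) (hx : x ∉ M.verts)
    (hy : y ∉ M.verts) : ¬ G.Adj x y := fun hxy => by
  have := hM.2 _ (hM.1.sup_subgraphOfAdj hx hy hxy)
  rw [ncard_edgeSet_sup_subgraphOfAdj hx hxy] at this
  omega

/-- Otherwise `x a b y` would be an augmenting path: trade `ab` for `xa` and `yb`. -/
lemma IsMaximumMatching.not_adj_of_adj_of_adj (hM : M.IsMaximumMatching) (hab : M.Adj a b)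
    (hx : x ∉ M.verts) (hy : y ∉ M.verts) (hxy : x ≠ y) (hxa : G.Adj x a) : ¬ G.Adj y b := by
  intro hyb
  have ha : a ∈ M.verts := M.edge_vert hab
  have hb : b ∈ M.verts := M.edge_vert hab.symm
  have hM₀ := hM.1.ncard_edgeSet_deleteVerts_pair hab
  set M₀ := M.deleteVerts {a, b}
  have hx₀ : x ∉ M₀.verts := fun h => hx h.1
  have ha₀ : a ∉ M₀.verts := fun h => h.2 (.inl rfl)
  set M₁ := M₀ ⊔ G.subgraphOfAdj hxa
  have hy₁ : y ∉ M₁.verts := by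
    simp only [M₁, M₀, verts_sup, deleteVerts_verts, subgraphOfAdj_verts]
    grind
  have hb₁ : b ∉ M₁.verts := by
    simp only [M₁, M₀, verts_sup, deleteVerts_verts, subgraphOfAdj_verts]
    grind [hab.ne]
  have hM₂ := ((hM.1.deleteVerts_pair hab).sup_subgraphOfAdj hx₀ ha₀ hxa).sup_subgraphOfAdj
    hy₁ hb₁ hyb
  have := hM.2 _ hM₂
  rw [ncard_edgeSet_sup_subgraphOfAdj hy₁, ncard_edgeSet_sup_subgraphOfAdj hx₀] at this
  omega

lemma IsMaximumMatching.not_adj_of_mem_sym2_neighborSet (hM : M.IsMaximumMatching)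
    (hx : x ∉ M.verts) (hy : y ∉ M.verts) (hxy : x ≠ y) {e : Sym2 V} (he : e ∈ M.edgeSet)
    (hex : e ∈ (G.neighborSet x).sym2) {z : V} (hz : z ∈ e) : ¬ G.Adj y z := by
  induction e using Sym2.ind with
  | _ a b =>
    obtain ⟨hxa, hxb⟩ := Set.mk_mem_sym2_iff.mp hex
    rcases Sym2.mem_iff.mp hz with rfl | rfl
    · exact fun hyz => hM.not_adj_of_adj_of_adj he hy hx hxy.symm hyz hxb
    · exact fun hyz => hM.not_adj_of_adj_of_adj he.symm hy hx hxy.symm hyz hxa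

lemma IsMaximumMatching.ncard_neighborSet_add_le (hM : M.IsMaximumMatching) {p q r : V}
    (hp : p ∉ M.verts) (hq : q ∉ M.verts) (hr : r ∉ M.verts)
    (hpq : p ≠ q) (hpr : p ≠ r) (hqr : q ≠ r) :
    (G.neighborSet p).ncard + (M.edgeSet ∩ (G.neighborSet q).sym2).ncard +
        (M.edgeSet ∩ (G.neighborSet r).sym2).ncard ≤
      (M.edgeSet ∩ (G.neighborSet p).sym2).ncard + M.edgeSet.ncard := by
  classical
  set Dq := M.edgeSet ∩ (G.neighborSet q).sym2
  set Dr := M.edgeSet ∩ (G.neighborSet r).sym2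
  have hdisj : Disjoint Dq Dr := Set.disjoint_left.mpr fun e heq her =>
    hM.not_adj_of_mem_sym2_neighborSet hq hr hqr heq.1 heq.2 e.out_fst_mem
      (Set.mem_sym2_iff_subset.mp her.2 e.out_fst_mem)
  set E := (M.edgeSet \ (Dq ∪ Dr)).toFinite.toFinset
  have hcover : G.neighborSet p ⊆ ⋃ e ∈ E, (e : Set V) := by
    intro w hpw
    have hw : w ∈ M.verts := by
      by_contra hw
      exact hM.not_adj_of_notMem_verts hp hw hpw
    rw [hM.1.verts_eq_biUnion_edgeSet] at hw
    obtain ⟨e, he, hwe⟩ := Set.mem_iUnion₂.mp hw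
    refine Set.mem_iUnion₂.mpr ⟨e, ?_, hwe⟩
    rw [Set.Finite.mem_toFinset]
    refine ⟨he, ?_⟩
    rintro (hDq | hDr)
    · exact hM.not_adj_of_mem_sym2_neighborSet hq hp hpq.symm he hDq.2 hwe hpw
    · exact hM.not_adj_of_mem_sym2_neighborSet hr hp hpr.symm he hDr.2 hwe hpw
  have hE : E.card + Dq.ncard + Dr.ncard = M.edgeSet.ncard := by
    rw [← Set.ncard_coe_finset, Set.Finite.coe_toFinset, add_assoc, ← Set.ncard_union_eq hdisj,
      Set.ncard_sdiff_add_ncard_of_subset (Set.union_subset Set.inter_subset_left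
        Set.inter_subset_left)]
  have hEp : (E.filter (· ∈ (G.neighborSet p).sym2)).card ≤
      (M.edgeSet ∩ (G.neighborSet p).sym2).ncard := by
    rw [← Set.ncard_coe_finset]
    refine Set.ncard_le_ncard fun e he => ?_
    simp only [Finset.coe_filter, Set.Finite.mem_toFinset, E] at he
    exact ⟨he.1.1, he.2⟩
  have := Set.ncard_le_card_add_card_filter_mem_sym2 hcover
  omega

theorem IsMaximumMatching.edgeSet_inter_sym2_neighborSet_eq_empty (hM : M.IsMaximumMatching)
    (hdeg : ∀ v, M.edgeSet.ncard ≤ (G.neighborSet v).ncard) (hX : 3 ≤ M.vertsᶜ.ncard)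
    (hx : x ∉ M.verts) : M.edgeSet ∩ (G.neighborSet x).sym2 = ∅ := by
  have hX' : 1 < (M.vertsᶜ \ {x}).ncard := by
    rw [Set.ncard_sdiff_singleton_of_mem hx]
    omega
  obtain ⟨y, z, ⟨hy, hyx⟩, ⟨hz, hzx⟩, hyz⟩ := (Set.one_lt_ncard_iff).mp hX'
  have hxy : x ≠ y := Ne.symm hyx
  have hxz : x ≠ z := Ne.symm hzx
  have := hM.ncard_neighborSet_add_le hx hy hz hxy hxz hyz
  have := hM.ncard_neighborSet_add_le hy hx hz hxy.symm hyz hxz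
  have := hM.ncard_neighborSet_add_le hz hx hy hxz.symm hyz.symm hxy
  have := hdeg x
  have := hdeg y
  have := hdeg z
  rw [← Set.ncard_eq_zero]
  omega

end SimpleGraph.Subgraph

lemma UGraph.ncard_setOf_le_ncard_neighborSet {V : Type*} [Finite V] {A : V → V → Prop}
    (hirr : ∀ v, ¬ A v v) (v : V) : {w | A v w}.ncard ≤ ((UGraph A).neighborSet v).ncard :=
  Set.ncard_le_ncard fun w hw => ⟨fun h => hirr v (h ▸ hw), .inl hw⟩

theorem stmt_16_general {V : Type*} [Fintype V] (A : V → V → Prop) (hirr : ∀ v, ¬ A v v)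
    (M : (UGraph A).Subgraph) (hM : M.IsMatching)
    (hmax : ∀ M' : (UGraph A).Subgraph, M'.IsMatching →
      M'.edgeSet.ncard ≤ M.edgeSet.ncard)
    (m : ℕ) (hm : M.edgeSet.ncard = m)
    (hX : 3 ≤ (M.vertsᶜ).ncard)
    (hdel : ∀ v : V, m ≤ {w | A v w}.ncard ∧ m ≤ {w | A w v}.ncard) :
    ¬ ∃ (u v x₁ : V), M.Adj u v ∧ x₁ ∈ M.vertsᶜ ∧
      (UGraph A).Adj u x₁ ∧ (UGraph A).Adj v x₁ := by
  rintro ⟨u, v, x₁, huv, hx₁, hux₁, hvx₁⟩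
  have hdeg (w : V) : M.edgeSet.ncard ≤ ((UGraph A).neighborSet w).ncard :=
    hm ▸ (hdel w).1.trans (UGraph.ncard_setOf_le_ncard_neighborSet hirr w)
  have hempty := Subgraph.IsMaximumMatching.edgeSet_inter_sym2_neighborSet_eq_empty
    ⟨hM, hmax⟩ hdeg hX hx₁
  have huv_mem : s(u, v) ∈ M.edgeSet ∩ ((UGraph A).neighborSet x₁).sym2 :=
    ⟨huv, Set.mk_mem_sym2_iff.mpr ⟨hux₁.symm, hvx₁.symm⟩⟩
  exact Set.notMem_empty _ (hempty ▸ huv_mem)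

/-- when `|X| ≥ 3` and `δ⁰(H) ≥ m`, no matching edge has both
endpoints adjacent to a common uncovered vertex. -/
theorem stmt_16 {V : Type*} [Fintype V] (A : V → V → Prop) (hirr : ∀ v, ¬ A v v)
    (M : (UGraph A).Subgraph) (hM : M.IsMatching)
    (hmax : ∀ M' : (UGraph A).Subgraph, M'.IsMatching →
      M'.edgeSet.ncard ≤ M.edgeSet.ncard)
    (m : ℕ) (hm : M.edgeSet.ncard = m) (hpos : 1 ≤ m)
    (hX : 3 ≤ (M.vertsᶜ).ncard)
    (hdel : ∀ v : V, m ≤ {w | A v w}.ncard ∧ m ≤ {w | A w v}.ncard) :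
    ¬ ∃ (u v x₁ : V), M.Adj u v ∧ x₁ ∈ M.vertsᶜ ∧
      (UGraph A).Adj u x₁ ∧ (UGraph A).Adj v x₁ :=
  stmt_16_general A hirr M hM hmax m hm hX hdel
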